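/- arXiv:2409.08403 — 4 statements merged into one kernel-verified Lean document; each statement's English description precedes it below -/
import Mathlib

section
/- Let Ω be a nonempty finite type with probability weights p : Ω → ℝ (p ω > 0 for all ω, ∑_ω p ω = 1), ξ : Ω → (ι → ℝ), and Θ convex on a convex set S ⊆ (ι → ℝ) containing the range of ξ. If a partition 𝒫' of Ω refines a partition 𝒫 (every part of 𝒫' is contained in some part of 𝒫), then the partition lower bounds satisfy ∑_{C ∈ 𝒫.parts} P(C) · Θ(μ_C) ≤ ∑_{C ∈ 𝒫'.parts} P(C) · Θ(μ_C). -/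
/-!
Each part `C` of the coarser partition is the disjoint union of the finer parts `D ⊆ C`, and
`μ_C` is the center of mass of the `μ_D` with weights `P(D)`. Jensen's inequality then gives
`P(C) Θ(μ_C) ≤ ∑_{D ⊆ C} P(D) Θ(μ_D)`, and summing over `C` yields the theorem.
-/

open Finset

namespace Finpartition

theorem sum_inf_parts_of_le {α M : Type*} [Lattice α] [OrderBot α] [AddCommMonoid M] {a b : α}
    {P Q : Finpartition a} (hQP : Q ≤ P) (hb : b ∈ Q.parts) (g : α → M) (hg : g ⊥ = 0) :
    ∑ c ∈ P.parts, g (b ⊓ c) = g b := by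
  obtain ⟨c₀, hc₀, hbc₀⟩ := hQP hb
  rw [sum_eq_single_of_mem c₀ hc₀ fun c hc hne => ?_, inf_eq_left.mpr hbc₀]
  have hbc : Disjoint b c := (P.disjoint hc₀ hc hne.symm).mono_left hbc₀
  rw [hbc.eq_bot, hg]

variable {α : Type*} [DecidableEq α] {s : Finset α}

theorem sum_sum_parts {M : Type*} [AddCommMonoid M] (P : Finpartition s) (f : α → M) :
    ∑ t ∈ P.parts, ∑ i ∈ t, f i = ∑ i ∈ s, f i := by
  conv_rhs => rw [← P.biUnion_parts]
  exact (sum_biUnion P.disjoint).symm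

theorem centerMass_parts {𝕜 E : Type*} [Field 𝕜] [AddCommGroup E] [Module 𝕜 E]
    (P : Finpartition s) {w : α → 𝕜} (z : α → E) (hw : ∀ t ∈ P.parts, ∑ i ∈ t, w i ≠ 0) :
    P.parts.centerMass (fun t => ∑ i ∈ t, w i) (fun t => t.centerMass w z) = s.centerMass w z := by
  simp only [centerMass, P.sum_sum_parts]
  rw [← P.sum_sum_parts (fun i => w i • z i)]
  congr 1
  exact sum_congr rfl fun t ht => smul_inv_smul₀ (hw t ht) _

end Finpartition

theorem ConvexOn.mul_map_centerMass_le_sum_parts {𝕜 E α : Type*} [Field 𝕜] [LinearOrder 𝕜]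
    [IsStrictOrderedRing 𝕜] [AddCommGroup E] [Module 𝕜 E] [DecidableEq α] {S : Set E}
    {f : E → 𝕜} (hf : ConvexOn 𝕜 S f) {s : Finset α} (P : Finpartition s) {w : α → 𝕜}
    {z : α → E} (hw : ∀ i ∈ s, 0 < w i) (hz : ∀ i ∈ s, z i ∈ S) :
    (∑ i ∈ s, w i) * f (s.centerMass w z) ≤
      ∑ t ∈ P.parts, (∑ i ∈ t, w i) * f (t.centerMass w z) := by
  rcases s.eq_empty_or_nonempty with rfl | hs
  · simp [P.parts_eq_empty_iff.mpr rfl]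
  have hW : ∀ t ∈ P.parts, 0 < ∑ i ∈ t, w i := fun t ht =>
    sum_pos (fun i hi => hw i (P.subset ht hi)) (P.nonempty_of_mem_parts ht)
  have hWs : 0 < ∑ i ∈ s, w i := sum_pos hw hs
  have hmem : ∀ t ∈ P.parts, t.centerMass w z ∈ S := fun t ht =>
    hf.1.centerMass_mem (fun i hi => (hw i (P.subset ht hi)).le) (hW t ht)
      fun i hi => hz i (P.subset ht hi)
  have jensen := hf.map_centerMass_le (fun t ht => (hW t ht).le)
    (by rwa [P.sum_sum_parts]) hmem
  rw [P.centerMass_parts z fun t ht => (hW t ht).ne'] at jensen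
  calc (∑ i ∈ s, w i) * f (s.centerMass w z)
      ≤ (∑ i ∈ s, w i) * P.parts.centerMass (fun t => ∑ i ∈ t, w i)
          (f ∘ fun t => t.centerMass w z) := mul_le_mul_of_nonneg_left jensen hWs.le
    _ = ∑ t ∈ P.parts, (∑ i ∈ t, w i) * f (t.centerMass w z) := by
      rw [centerMass, P.sum_sum_parts, smul_eq_mul, mul_inv_cancel_left₀ hWs.ne']
      rfl

theorem refinement_tightens_lower_bound_general
    {Ω ι : Type*} [Fintype Ω] [DecidableEq Ω]
    (p : Ω → ℝ) (hp : ∀ ω, 0 < p ω)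
    (ξ : Ω → ι → ℝ) (S : Set (ι → ℝ))
    (hξS : ∀ ω, ξ ω ∈ S)
    (Θ : (ι → ℝ) → ℝ) (hΘ : ConvexOn ℝ S Θ)
    (Pt Pt' : Finpartition (Finset.univ : Finset Ω)) (href : Pt' ≤ Pt) :
    ∑ C ∈ Pt.parts,
        (∑ ω ∈ C, p ω) * Θ ((∑ ω ∈ C, p ω)⁻¹ • ∑ ω ∈ C, p ω • ξ ω) ≤
      ∑ C ∈ Pt'.parts,
        (∑ ω ∈ C, p ω) * Θ ((∑ ω ∈ C, p ω)⁻¹ • ∑ ω ∈ C, p ω • ξ ω) := by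
  set bound : Finset Ω → ℝ := fun C => (∑ ω ∈ C, p ω) * Θ (C.centerMass p ξ)
  have bound_empty : bound ∅ = 0 := by simp [bound]
  calc ∑ C ∈ Pt.parts, bound C
      ≤ ∑ C ∈ Pt.parts, ∑ D ∈ Pt'.parts, bound (D ⊓ C) := sum_le_sum fun C hC => by
        rw [← Pt'.sum_restrict (Pt.le hC) bound bound_empty]
        exact hΘ.mul_map_centerMass_le_sum_parts _ (fun ω _ => hp ω) fun ω _ => hξS ω
    _ = ∑ D ∈ Pt'.parts, bound D := by
      rw [sum_comm]
      exact sum_congr rfl fun D hD => Pt.sum_inf_parts_of_le href hD bound bound_empty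

/-- Theorem 2 of the paper: refining a partition yields a mean-value lower bound
that is at least as tight. `Pt' ≤ Pt` is the refinement order on `Finpartition`
(every part of `Pt'` is contained in some part of `Pt`). -/
theorem refinement_tightens_lower_bound
    {Ω ι : Type*} [Fintype Ω] [DecidableEq Ω] [Nonempty Ω] [Fintype ι]
    (p : Ω → ℝ) (hp : ∀ ω, 0 < p ω) (hsum : ∑ ω, p ω = 1)
    (ξ : Ω → ι → ℝ) (S : Set (ι → ℝ)) (hS : Convex ℝ S)
    (hξS : ∀ ω, ξ ω ∈ S)
    (Θ : (ι → ℝ) → ℝ) (hΘ : ConvexOn ℝ S Θ)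
    (Pt Pt' : Finpartition (Finset.univ : Finset Ω)) (href : Pt' ≤ Pt) :
    ∑ C ∈ Pt.parts,
        (∑ ω ∈ C, p ω) * Θ ((∑ ω ∈ C, p ω)⁻¹ • ∑ ω ∈ C, p ω • ξ ω) ≤
      ∑ C ∈ Pt'.parts,
        (∑ ω ∈ C, p ω) * Θ ((∑ ω ∈ C, p ω)⁻¹ • ∑ ω ∈ C, p ω • ξ ω) :=
  refinement_tightens_lower_bound_general p hp ξ S hξS Θ hΘ Pt Pt' href
end

section
/- Let Ω be a nonempty finite type with probability weights p : Ω → ℝ (p ω > 0 for all ω, ∑_ω p ω = 1) and ξ : Ω → (ι → ℝ). Suppose Θ is convex and Θ̃ is concave on a convex set S ⊆ (ι → ℝ) containing the range of ξ, and Θ̃(ξ ω) = Θ(ξ ω) for every ω ∈ Ω. Then for every partition 𝒫 of Ω, writing P(C) = ∑_{ω ∈ C} p ω and μ_C for the p-weighted mean of ξ over a cell C, we have ∑_{C ∈ 𝒫.parts} P(C) · Θ(μ_C) ≤ ∑_{ω ∈ Ω} p ω · Θ(ξ ω) ≤ ∑_{C ∈ 𝒫.parts} P(C) · Θ̃(μ_C);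 i.e., any partition provides a valid lower bound and a valid upper bound on the true expected recourse value. -/
/-- The bound-gap sandwich (Theorem 1 plus Corollary 2): any partition provides
a valid lower bound (via the convex recourse function `Θ`) and a valid upper
bound (via the concave penalized reformulation `Θt`, which agrees with `Θ` on
the support) on the true expected recourse value. -/
theorem partition_sandwich
    {Ω ι : Type*} [Fintype Ω] [DecidableEq Ω] [Nonempty Ω] [Fintype ι]
    (p : Ω → ℝ) (hp : ∀ ω, 0 < p ω) (hsum : ∑ ω, p ω = 1)
    (ξ : Ω → ι → ℝ) (S : Set (ι → ℝ)) (hS : Convex ℝ S)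
    (hξS : ∀ ω, ξ ω ∈ S)
    (Θ Θt : (ι → ℝ) → ℝ) (hΘ : ConvexOn ℝ S Θ) (hΘt : ConcaveOn ℝ S Θt)
    (hagree : ∀ ω, Θt (ξ ω) = Θ (ξ ω))
    (Pt : Finpartition (Finset.univ : Finset Ω)) :
    (∑ C ∈ Pt.parts,
        (∑ ω ∈ C, p ω) * Θ ((∑ ω ∈ C, p ω)⁻¹ • ∑ ω ∈ C, p ω • ξ ω)) ≤
        ∑ ω, p ω * Θ (ξ ω) ∧
    (∑ ω, p ω * Θ (ξ ω)) ≤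
        ∑ C ∈ Pt.parts,
          (∑ ω ∈ C, p ω) * Θt ((∑ ω ∈ C, p ω)⁻¹ • ∑ ω ∈ C, p ω • ξ ω) := by
  have hsplit : ∀ f : Ω → ℝ, ∑ C ∈ Pt.parts, ∑ ω ∈ C, f ω = ∑ ω, f ω := by
    intro f
    calc ∑ C ∈ Pt.parts, ∑ ω ∈ C, f ω
        = ∑ ω ∈ Pt.parts.biUnion id, f ω :=
          (Finset.sum_biUnion Pt.supIndep.pairwiseDisjoint).symm
      _ = ∑ ω, f ω := by rw [Pt.biUnion_parts]
  have hPpos : ∀ C ∈ Pt.parts, 0 < ∑ ω ∈ C, p ω := by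
    intro C hC
    obtain ⟨ω, hω⟩ := Finpartition.nonempty_of_mem_parts Pt hC
    exact Finset.sum_pos' (fun i _ => (hp i).le) ⟨ω, hω, hp ω⟩
  constructor
  · rw [← hsplit (fun ω => p ω * Θ (ξ ω))]
    refine Finset.sum_le_sum fun C hC => ?_
    have h := hΘ.map_centerMass_le (t := C) (w := p) (p := ξ)
      (fun i _ => (hp i).le) (hPpos C hC) (fun i _ => hξS i)
    rw [Finset.centerMass, Finset.centerMass] at h
    have := mul_le_mul_of_nonneg_left h (hPpos C hC).le
    calc (∑ ω ∈ C, p ω) * Θ ((∑ ω ∈ C, p ω)⁻¹ • ∑ ω ∈ C, p ω • ξ ω)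
        ≤ (∑ ω ∈ C, p ω) * ((∑ ω ∈ C, p ω)⁻¹ • ∑ ω ∈ C, p ω • Θ (ξ ω)) := this
      _ = ∑ ω ∈ C, p ω * Θ (ξ ω) := by
          rw [smul_eq_mul, ← mul_assoc, mul_inv_cancel₀ (hPpos C hC).ne', one_mul]
          simp [smul_eq_mul]
  · rw [← hsplit (fun ω => p ω * Θ (ξ ω))]
    refine Finset.sum_le_sum fun C hC => ?_
    have h := hΘt.le_map_centerMass (t := C) (w := p) (p := ξ)
      (fun i _ => (hp i).le) (hPpos C hC) (fun i _ => hξS i)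
    rw [Finset.centerMass, Finset.centerMass] at h
    have := mul_le_mul_of_nonneg_left h (hPpos C hC).le
    calc ∑ ω ∈ C, p ω * Θ (ξ ω)
        = (∑ ω ∈ C, p ω) * ((∑ ω ∈ C, p ω)⁻¹ • ∑ ω ∈ C, p ω • Θt (ξ ω)) := by
          rw [smul_eq_mul, ← mul_assoc, mul_inv_cancel₀ (hPpos C hC).ne', one_mul]
          simp [smul_eq_mul, hagree]
      _ ≤ (∑ ω ∈ C, p ω) * Θt ((∑ ω ∈ C, p ω)⁻¹ • ∑ ω ∈ C, p ω • ξ ω) := this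
end

section
/- Let X be a nonempty finite type of first-stage decisions, and for each x ∈ X let p_x : Ω → ℝ be probability weights on the nonempty finite type Ω (p_x ω > 0 for all ω, ∑_ω p_x ω = 1). Let c : X → ℝ, ξ : Ω → (ι → ℝ), and Θ convex on a convex set S ⊆ (ι → ℝ) containing the range of ξ. For a partition 𝒫 of Ω define w(x; 𝒫) := c x + ∑_{C ∈ 𝒫.parts} P_x(C) · Θ(μ_{C,x}) and the true objective z(x) := c x + ∑_{ω ∈ Ω} p_x ω · Θ(ξ ω). If 𝒫' refines 𝒫, then min_{x ∈ X} w(x; 𝒫) ≤ min_{x ∈ X} w(x; 𝒫') ≤ min_{x ∈ X} z(x); i.e., the optimal value of the mean value lower bound problem is monotone under refinement and never exceeds the true optimal value z*. -/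
open Finset

section aux
variable {α ι : Type*} {S : Set (ι → ℝ)} {Θ : (ι → ℝ) → ℝ}

lemma jensen_general (hΘ : ConvexOn ℝ S Θ)
    (t : Finset α) (ht : t.Nonempty) (w : α → ℝ) (hw : ∀ a ∈ t, 0 < w a)
    (z : α → ι → ℝ) (hz : ∀ a ∈ t, z a ∈ S) :
    (∑ a ∈ t, w a) * Θ ((∑ a ∈ t, w a)⁻¹ • ∑ a ∈ t, w a • z a)
      ≤ ∑ a ∈ t, w a * Θ (z a) := by
  have hw0 : ∀ a ∈ t, 0 ≤ w a := fun a ha => (hw a ha).le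
  have hWpos : 0 < ∑ a ∈ t, w a := Finset.sum_pos hw ht
  have h := hΘ.map_centerMass_le hw0 hWpos hz
  rw [Finset.centerMass, Finset.centerMass] at h
  have h2 := mul_le_mul_of_nonneg_left h hWpos.le
  calc (∑ a ∈ t, w a) * Θ ((∑ a ∈ t, w a)⁻¹ • ∑ a ∈ t, w a • z a)
      ≤ (∑ a ∈ t, w a) * ((∑ a ∈ t, w a)⁻¹ • ∑ a ∈ t, w a • (Θ ∘ z) a) := h2
    _ = ∑ a ∈ t, w a * Θ (z a) := by
        rw [smul_eq_mul, ← mul_assoc, mul_inv_cancel₀ hWpos.ne', one_mul]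
        simp [smul_eq_mul, Function.comp]

lemma mean_mem (hS : Convex ℝ S)
    (t : Finset α) (ht : t.Nonempty) (w : α → ℝ) (hw : ∀ a ∈ t, 0 < w a)
    (z : α → ι → ℝ) (hz : ∀ a ∈ t, z a ∈ S) :
    (∑ a ∈ t, w a)⁻¹ • ∑ a ∈ t, w a • z a ∈ S := by
  have hWpos : 0 < ∑ a ∈ t, w a := Finset.sum_pos hw ht
  have := Finset.centerMass_mem_convexHull t (fun a ha => (hw a ha).le) hWpos
    (fun a ha => hz a ha)
  rw [hS.convexHull_eq] at this
  rwa [Finset.centerMass] at this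

variable {Ω : Type*} [Fintype Ω] [DecidableEq Ω]

lemma parts_le_true (hΘ : ConvexOn ℝ S Θ)
    (q : Ω → ℝ) (hq : ∀ ω, 0 < q ω) (ξ : Ω → ι → ℝ) (hξS : ∀ ω, ξ ω ∈ S)
    (P : Finpartition (Finset.univ : Finset Ω)) :
    ∑ C ∈ P.parts, (∑ ω ∈ C, q ω) * Θ ((∑ ω ∈ C, q ω)⁻¹ • ∑ ω ∈ C, q ω • ξ ω)
      ≤ ∑ ω, q ω * Θ (ξ ω) := by
  have : (∑ ω, q ω * Θ (ξ ω)) = ∑ C ∈ P.parts, ∑ ω ∈ C, q ω * Θ (ξ ω) := by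
    have h2 : ∑ ω ∈ P.parts.biUnion id, q ω * Θ (ξ ω)
        = ∑ C ∈ P.parts, ∑ ω ∈ C, q ω * Θ (ξ ω) :=
      Finset.sum_biUnion P.supIndep.pairwiseDisjoint
    rw [P.biUnion_parts] at h2
    exact h2
  rw [this]
  refine Finset.sum_le_sum fun C hC => ?_
  exact jensen_general hΘ C (P.nonempty_of_mem_parts hC) q (fun ω _ => hq ω)
    ξ (fun ω _ => hξS ω)

lemma parts_refine_mono (hS : Convex ℝ S) (hΘ : ConvexOn ℝ S Θ)
    (q : Ω → ℝ) (hq : ∀ ω, 0 < q ω) (ξ : Ω → ι → ℝ) (hξS : ∀ ω, ξ ω ∈ S)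
    (Pt Pt' : Finpartition (Finset.univ : Finset Ω)) (href : Pt' ≤ Pt) :
    ∑ C ∈ Pt.parts, (∑ ω ∈ C, q ω) * Θ ((∑ ω ∈ C, q ω)⁻¹ • ∑ ω ∈ C, q ω • ξ ω)
      ≤ ∑ C ∈ Pt'.parts, (∑ ω ∈ C, q ω)
          * Θ ((∑ ω ∈ C, q ω)⁻¹ • ∑ ω ∈ C, q ω • ξ ω) := by
  classical
  set F : Finset Ω → ℝ := fun C =>
    (∑ ω ∈ C, q ω) * Θ ((∑ ω ∈ C, q ω)⁻¹ • ∑ ω ∈ C, q ω • ξ ω) with hF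
  set g : Finset Ω → Finset Ω := fun D =>
    if h : D ∈ Pt'.parts then (href h).choose else ∅ with hg
  have hg1 : ∀ D ∈ Pt'.parts, g D ∈ Pt.parts ∧ D ⊆ g D := by
    intro D hD
    simp only [hg, dif_pos hD]
    exact ⟨(href hD).choose_spec.1, (href hD).choose_spec.2⟩
  have hmaps : ∀ D ∈ Pt'.parts, g D ∈ Pt.parts := fun D hD => (hg1 D hD).1
  rw [← Finset.sum_fiberwise_of_maps_to hmaps F]
  refine Finset.sum_le_sum fun C hC => ?_
  set fib := Pt'.parts.filter (fun D => g D = C) with hfib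
  have hCeq : C = fib.biUnion id := by
    ext ω
    constructor
    · intro hω
      have : ω ∈ Pt'.parts.biUnion id := by rw [Pt'.biUnion_parts]; exact mem_univ ω
      obtain ⟨D, hD, hωD⟩ := Finset.mem_biUnion.mp this
      have hgD : g D = C :=
        Pt.eq_of_mem_parts (hg1 D hD).1 hC ((hg1 D hD).2 hωD) hω
      exact Finset.mem_biUnion.mpr ⟨D, Finset.mem_filter.mpr ⟨hD, hgD⟩, hωD⟩
    · intro hω
      obtain ⟨D, hD, hωD⟩ := Finset.mem_biUnion.mp hω
      obtain ⟨hD', hgD⟩ := Finset.mem_filter.mp hD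
      exact hgD ▸ (hg1 D hD').2 hωD
  have hdisj : (↑fib : Set (Finset Ω)).PairwiseDisjoint id :=
    Pt'.supIndep.pairwiseDisjoint.subset (by exact_mod_cast Finset.filter_subset _ _)
  have hfibne : fib.Nonempty := by
    by_contra h
    rw [Finset.not_nonempty_iff_eq_empty] at h
    have := Pt.nonempty_of_mem_parts hC
    rw [hCeq, h] at this
    simp at this
  -- weights and means for each subpart
  set w : Finset Ω → ℝ := fun D => ∑ ω ∈ D, q ω with hw
  set μ : Finset Ω → (ι → ℝ) := fun D => (w D)⁻¹ • ∑ ω ∈ D, q ω • ξ ω with hμ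
  have hwpos : ∀ D ∈ fib, 0 < w D := fun D hD =>
    Finset.sum_pos (fun ω _ => hq ω)
      (Pt'.nonempty_of_mem_parts (Finset.mem_filter.mp hD).1)
  have hμS : ∀ D ∈ fib, μ D ∈ S := fun D hD =>
    mean_mem hS D (Pt'.nonempty_of_mem_parts (Finset.mem_filter.mp hD).1) q
      (fun ω _ => hq ω) ξ (fun ω _ => hξS ω)
  have hsumq : ∑ ω ∈ C, q ω = ∑ D ∈ fib, w D := by
    rw [hCeq, Finset.sum_biUnion hdisj]
    rfl
  have hsumv : ∑ ω ∈ C, q ω • ξ ω = ∑ D ∈ fib, w D • μ D := by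
    rw [hCeq, Finset.sum_biUnion hdisj]
    refine Finset.sum_congr rfl fun D hD => ?_
    simp only [hμ, id]
    rw [smul_inv_smul₀ (hwpos D hD).ne']
  have key := jensen_general hΘ fib hfibne w hwpos μ hμS
  have hFle : F C ≤ ∑ D ∈ fib, w D * Θ (μ D) := by
    rw [hF]; dsimp only; rw [hsumq, hsumv]; exact key
  refine hFle.trans (le_of_eq ?_)
  refine Finset.sum_congr rfl fun D hD => ?_
  simp only [hF, hμ, hw]

end aux

/-- Corollary 4 of the paper: the optimal value of the mean value lower bound
problem is monotone under refinement of the partition and never exceeds the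
true optimal value `z*` of the stochastic program with decision-dependent
probabilities. -/
theorem mean_value_lower_bound_problem_monotone
    {X Ω ι : Type*} [Fintype X] [Nonempty X]
    [Fintype Ω] [DecidableEq Ω] [Nonempty Ω] [Fintype ι]
    (p : X → Ω → ℝ) (hp : ∀ x ω, 0 < p x ω) (hsum : ∀ x, ∑ ω, p x ω = 1)
    (c : X → ℝ)
    (ξ : Ω → ι → ℝ) (S : Set (ι → ℝ)) (hS : Convex ℝ S)
    (hξS : ∀ ω, ξ ω ∈ S)
    (Θ : (ι → ℝ) → ℝ) (hΘ : ConvexOn ℝ S Θ)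
    (Pt Pt' : Finpartition (Finset.univ : Finset Ω)) (href : Pt' ≤ Pt) :
    Finset.univ.inf' Finset.univ_nonempty (fun x : X =>
        c x + ∑ C ∈ Pt.parts,
          (∑ ω ∈ C, p x ω) * Θ ((∑ ω ∈ C, p x ω)⁻¹ • ∑ ω ∈ C, p x ω • ξ ω)) ≤
      Finset.univ.inf' Finset.univ_nonempty (fun x : X =>
        c x + ∑ C ∈ Pt'.parts,
          (∑ ω ∈ C, p x ω) * Θ ((∑ ω ∈ C, p x ω)⁻¹ • ∑ ω ∈ C, p x ω • ξ ω)) ∧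
    Finset.univ.inf' Finset.univ_nonempty (fun x : X =>
        c x + ∑ C ∈ Pt'.parts,
          (∑ ω ∈ C, p x ω) * Θ ((∑ ω ∈ C, p x ω)⁻¹ • ∑ ω ∈ C, p x ω • ξ ω)) ≤
      Finset.univ.inf' Finset.univ_nonempty (fun x : X =>
        c x + ∑ ω, p x ω * Θ (ξ ω)) := by
  have hmono : ∀ f g : X → ℝ, (∀ x, f x ≤ g x) →
      Finset.univ.inf' Finset.univ_nonempty f ≤
        Finset.univ.inf' Finset.univ_nonempty g := by
    intro f g h
    refine Finset.le_inf' _ _ fun x hx => ?_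
    exact (Finset.inf'_le f (Finset.mem_univ x)).trans (h x)
  constructor
  · refine hmono _ _ fun x => ?_
    exact add_le_add_right
      (parts_refine_mono hS hΘ (p x) (hp x) ξ hξS Pt Pt' href) _
  · refine hmono _ _ fun x => ?_
    exact add_le_add_right (parts_le_true hΘ (p x) (hp x) ξ hξS Pt') _
end

section
/- Let Ω be a nonempty finite type with probability weights p : Ω → ℝ (p ω > 0 for all ω, ∑_ω p ω = 1), ξ : Ω → (ι → ℝ), and let Θ̃ be concave on a convex set S ⊆ (ι → ℝ) containing the range of ξ. Let C be a nonempty finite subset of Ω and let C₁, …, C_m be pairwise disjoint nonempty finite sets whose union is C. Then ∑_{j=1}^{m} P(C_j) · Θ̃(μ_{C_j}) ≤ P(C) · Θ̃(μ_C); i.e., subdividing a single cell can only decrease that cell's contribution to the penalized mean-value upper bound. -/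
/-!
Concavity of `Θ̃` makes its perspective `(t, y) ↦ t • Θ̃ (t⁻¹ • y)` superadditive on positive
masses (Jensen's inequality with weights `P(C_j) / P(C)`). The contribution of the cell `C_j` is
the perspective at `(P(C_j), ∑_{ω ∈ C_j} p ω • ξ ω)`, and both coordinates add up over the
partition to those of `C`.
-/

open Finset

section Perspective

variable {𝕜 E ι : Type*} [Field 𝕜] [LinearOrder 𝕜] [IsStrictOrderedRing 𝕜]
  [AddCommGroup E] [Module 𝕜 E] {S : Set E} {f : E → 𝕜}

theorem ConcaveOn.sum_mul_map_inv_smul_le (hf : ConcaveOn 𝕜 S f) {s : Finset ι} {t : ι → 𝕜}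
    {y : ι → E} (ht : ∀ i ∈ s, 0 < t i) (hy : ∀ i ∈ s, (t i)⁻¹ • y i ∈ S) :
    ∑ i ∈ s, t i * f ((t i)⁻¹ • y i) ≤
      (∑ i ∈ s, t i) * f ((∑ i ∈ s, t i)⁻¹ • ∑ i ∈ s, y i) := by
  rcases s.eq_empty_or_nonempty with rfl | hs
  · simp
  have hT : 0 < ∑ i ∈ s, t i := sum_pos ht hs
  have hjensen := hf.le_map_centerMass (fun i hi => (ht i hi).le) hT hy
  have hmean : s.centerMass t (fun i => (t i)⁻¹ • y i) = (∑ i ∈ s, t i)⁻¹ • ∑ i ∈ s, y i := by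
    refine congrArg _ (sum_congr rfl fun i hi => ?_)
    exact smul_inv_smul₀ (ht i hi).ne' (y i)
  calc ∑ i ∈ s, t i * f ((t i)⁻¹ • y i)
      = (∑ i ∈ s, t i) * s.centerMass t (f ∘ fun i => (t i)⁻¹ • y i) := by
        simp only [centerMass, smul_eq_mul, Function.comp_apply, mul_inv_cancel_left₀ hT.ne']
    _ ≤ (∑ i ∈ s, t i) * f ((∑ i ∈ s, t i)⁻¹ • ∑ i ∈ s, y i) := by
        rw [← hmean]
        exact mul_le_mul_of_nonneg_left hjensen hT.le

end Perspective

theorem subdividing_cell_decreases_upper_bound_general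
    {Ω ι : Type*} [DecidableEq Ω]
    (p : Ω → ℝ) (hp : ∀ ω, 0 < p ω)
    (ξ : Ω → ι → ℝ) (S : Set (ι → ℝ)) (hS : Convex ℝ S)
    (hξS : ∀ ω, ξ ω ∈ S)
    (Θt : (ι → ℝ) → ℝ) (hΘt : ConcaveOn ℝ S Θt)
    (C : Finset Ω)
    (m : ℕ) (D : Fin m → Finset Ω)
    (hDne : ∀ j, (D j).Nonempty)
    (hdisj : Pairwise fun j k => Disjoint (D j) (D k))
    (hunion : Finset.univ.biUnion D = C) :
    (∑ j : Fin m,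
        (∑ ω ∈ D j, p ω) * Θt ((∑ ω ∈ D j, p ω)⁻¹ • ∑ ω ∈ D j, p ω • ξ ω)) ≤
      (∑ ω ∈ C, p ω) * Θt ((∑ ω ∈ C, p ω)⁻¹ • ∑ ω ∈ C, p ω • ξ ω) := by
  have hD : Set.PairwiseDisjoint ↑(univ : Finset (Fin m)) D := fun j _ k _ hjk => hdisj hjk
  have hcell_pos (j : Fin m) : 0 < ∑ ω ∈ D j, p ω := sum_pos (fun ω _ => hp ω) (hDne j)
  have hmean_mem (j : Fin m) : (D j).centerMass p ξ ∈ S :=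
    hS.centerMass_mem (fun ω _ => (hp ω).le) (hcell_pos j) fun ω _ => hξS ω
  rw [← hunion, sum_biUnion hD, sum_biUnion hD]
  exact hΘt.sum_mul_map_inv_smul_le (fun j _ => hcell_pos j) fun j _ => hmean_mem j

/-- The single-cell step underlying Corollary 3: for a concave (penalized)
function `Θt`, subdividing a cell `C` into pairwise disjoint nonempty cells
`D 1, …, D m` whose union is `C` can only decrease that cell's contribution to
the penalized mean-value upper bound. -/
theorem subdividing_cell_decreases_upper_bound
    {Ω ι : Type*} [Fintype Ω] [DecidableEq Ω] [Nonempty Ω] [Fintype ι]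
    (p : Ω → ℝ) (hp : ∀ ω, 0 < p ω) (hsum : ∑ ω, p ω = 1)
    (ξ : Ω → ι → ℝ) (S : Set (ι → ℝ)) (hS : Convex ℝ S)
    (hξS : ∀ ω, ξ ω ∈ S)
    (Θt : (ι → ℝ) → ℝ) (hΘt : ConcaveOn ℝ S Θt)
    (C : Finset Ω) (hC : C.Nonempty)
    (m : ℕ) (D : Fin m → Finset Ω)
    (hDne : ∀ j, (D j).Nonempty)
    (hdisj : Pairwise fun j k => Disjoint (D j) (D k))
    (hunion : Finset.univ.biUnion D = C) :
    (∑ j : Fin m,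
        (∑ ω ∈ D j, p ω) * Θt ((∑ ω ∈ D j, p ω)⁻¹ • ∑ ω ∈ D j, p ω • ξ ω)) ≤
      (∑ ω ∈ C, p ω) * Θt ((∑ ω ∈ C, p ω)⁻¹ • ∑ ω ∈ C, p ω • ξ ω) :=
  subdividing_cell_decreases_upper_bound_general p hp ξ S hS hξS Θt hΘt C m D hDne hdisj hunion
end
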